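/- Let Δ ≥ 1 and let a, x be integers with 1 ≤ a ≤ Δ and 0 ≤ x ≤ Δ − 1. Then there is no function f : Fin Δ → Σ such that the multiset of values of f lies in N_Δ(a,x) and for every i ∈ Fin Δ the unordered pair {f(i), f(i)} lies in the edge constraint E. Equivalently, every multiset in N_Δ(a,x) contains at least one label ℓ with {ℓ, ℓ} ∉ E. -/

import Mathlib

inductive Lab : Type
  | M | P | O | A | X
  deriving DecidableEq

instance instFintypeLab : Fintype Lab :=
  ⟨{Lab.M, Lab.P, Lab.O, Lab.A, Lab.X}, fun l => by cases l <;> simp⟩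

/-- Node constraint `N_Δ(a,x)`: the three allowed multisets of size `Δ`. -/
def nodeC (Δ a x : ℕ) (m : Multiset Lab) : Prop :=
  m = Multiset.replicate (Δ - x) Lab.M + Multiset.replicate x Lab.X ∨
  m = Multiset.replicate a Lab.A + Multiset.replicate (Δ - a) Lab.X ∨
  m = Lab.P ::ₘ Multiset.replicate (Δ - 1) Lab.O

/-- Edge constraint `E`: all unordered pairs except `{M,M}, {A,A}, {P,P}, {P,A}, {P,O}`. -/
def edgeC (l₁ l₂ : Lab) : Prop :=
  ¬ ((l₁ = Lab.M ∧ l₂ = Lab.M) ∨ (l₁ = Lab.A ∧ l₂ = Lab.A) ∨ (l₁ = Lab.P ∧ l₂ = Lab.P) ∨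
     (l₁ = Lab.P ∧ l₂ = Lab.A) ∨ (l₁ = Lab.A ∧ l₂ = Lab.P) ∨
     (l₁ = Lab.P ∧ l₂ = Lab.O) ∨ (l₁ = Lab.O ∧ l₂ = Lab.P))

instance (l₁ l₂ : Lab) : Decidable (edgeC l₁ l₂) := by
  unfold edgeC; infer_instance

/-- A valid `Π_Δ(a,x)`-labeling: `ℓ u v` is the label that `u` assigns to the edge `{u,v}`. -/
def validLabeling {V : Type*} [Fintype V] (G : SimpleGraph V) [DecidableRel G.Adj]
    (Δ a x : ℕ) (ℓ : V → V → Lab) : Prop :=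
  (∀ v : V, nodeC Δ a x ((G.neighborFinset v).val.map (ℓ v))) ∧
  (∀ u v : V, G.Adj u v → edgeC (ℓ u v) (ℓ v u))

theorem edgeC_self_iff {l : Lab} : edgeC l l ↔ l = Lab.O ∨ l = Lab.X := by
  cases l <;> simp [edgeC]

theorem exists_not_edgeC_self_of_nodeC {Δ a x : ℕ} (hx : x < Δ) (ha : 0 < a) {m : Multiset Lab}
    (hm : nodeC Δ a x m) : ∃ l ∈ m, ¬ edgeC l l := by
  rcases hm with rfl | rfl | rfl
  · exact ⟨Lab.M, Multiset.mem_add.2 (.inl (Multiset.mem_replicate.2 ⟨by omega, rfl⟩)),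
      by simp [edgeC_self_iff]⟩
  · exact ⟨Lab.A, Multiset.mem_add.2 (.inl (Multiset.mem_replicate.2 ⟨by omega, rfl⟩)),
      by simp [edgeC_self_iff]⟩
  · exact ⟨Lab.P, Multiset.mem_cons_self _ _, by simp [edgeC_self_iff]⟩

theorem stmt_6_general (Δ a x : ℕ) (hΔ : 1 ≤ Δ) (ha1 : 1 ≤ a) (hx : x ≤ Δ - 1) :
    (¬ ∃ f : Fin Δ → Lab,
        nodeC Δ a x (Finset.univ.val.map f) ∧ ∀ i : Fin Δ, edgeC (f i) (f i)) ∧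
    (∀ m : Multiset Lab, nodeC Δ a x m → ∃ l ∈ m, ¬ edgeC l l) := by
  have key : ∀ m, nodeC Δ a x m → ∃ l ∈ m, ¬ edgeC l l :=
    fun _ => exists_not_edgeC_self_of_nodeC (by omega) ha1
  refine ⟨?_, key⟩
  rintro ⟨f, hf, hf_self⟩
  obtain ⟨l, hl, hl_bad⟩ := key _ hf
  obtain ⟨i, -, rfl⟩ := Multiset.mem_map.1 hl
  exact hl_bad (hf_self i)

/-- (Core of Lemma 3.6.) For `1 ≤ a ≤ Δ` and `x ≤ Δ − 1`, no function
`f : Fin Δ → Σ` has its multiset of values in `N_Δ(a,x)` while every label `f i` is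
edge-compatible with itself; equivalently, every multiset in `N_Δ(a,x)` contains a label
that is not edge-compatible with itself. -/
theorem stmt_6 (Δ a x : ℕ) (hΔ : 1 ≤ Δ) (ha1 : 1 ≤ a) (haΔ : a ≤ Δ) (hx : x ≤ Δ - 1) :
    (¬ ∃ f : Fin Δ → Lab,
        nodeC Δ a x (Finset.univ.val.map f) ∧ ∀ i : Fin Δ, edgeC (f i) (f i)) ∧
    (∀ m : Multiset Lab, nodeC Δ a x m → ∃ l ∈ m, ¬ edgeC l l) :=
  stmt_6_general Δ a x hΔ ha1 hx
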